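/- arXiv:math/0310103 — 5 statements merged into one kernel-verified Lean document; each statement's English description precedes it below -/
import Mathlib

section
/- Let f be a picture from a Young diagram λ (a non-skew French diagram with its lower-left box at a fixed corner) to a skew diagram E, where boxes of λ in row i have row index i. Define for each box S = (i,j) of λ the readiness number r(S) = i − i', where (i',j') = f(S). Then along each row of λ the readiness numbers are weakly increasing from left to right, and down each column of λ they are weakly decreasing, i.e., for boxes A directly above B in the same column, r(A) ≥ r(B). -/
/-- Lexicographic order on boxes `(row, column)` (smaller row index = higher). -/
def LexLt (A B : ℕ × ℕ) : Prop := A.1 < B.1 ∨ (A.1 = B.1 ∧ A.2 < B.2)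

/-- `A` is weakly above and weakly right of `B`. -/
def AboveRight (A B : ℕ × ℕ) : Prop := A.1 ≤ B.1 ∧ B.2 ≤ A.2

/-- Let `f` be a picture from a (non-skew, French) Young diagram
`D` — row `i` consists of boxes `(i, c)` with `c < len i`, where `len` is
weakly increasing (lower rows are longer) — to a skew diagram `E`.  Define the
readiness number of a box `S ∈ D` to be `S.1 − (f S).1`.  Then along each row
of `D` the readiness numbers weakly increase from left to right, and down each
column of `D` they weakly decrease. -/
theorem stmt11 (rows : ℕ) (len : ℕ → ℕ) (hlen : Monotone len)
    (D E : Finset (ℕ × ℕ))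
    (hD : ∀ p : ℕ × ℕ, p ∈ D ↔ p.1 < rows ∧ p.2 < len p.1)
    (f g : ℕ × ℕ → ℕ × ℕ)
    (hf : Set.BijOn f ↑D ↑E) (hg : Set.InvOn g f ↑D ↑E)
    (hpic : ∀ A ∈ D, ∀ B ∈ D, A ≠ B → AboveRight A B → LexLt (f A) (f B))
    (hpic' : ∀ A ∈ E, ∀ B ∈ E, A ≠ B → AboveRight A B → LexLt (g A) (g B)) :
    (∀ A ∈ D, ∀ B ∈ D, A.1 = B.1 → A.2 ≤ B.2 →
      (A.1 : ℤ) - (f A).1 ≤ (B.1 : ℤ) - (f B).1) ∧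
    (∀ A ∈ D, ∀ B ∈ D, A.2 = B.2 → A.1 ≤ B.1 →
      (B.1 : ℤ) - (f B).1 ≤ (A.1 : ℤ) - (f A).1) := by
  -- Key step: adjacent boxes in a column have strictly increasing image rows.
  have step : ∀ k c : ℕ, (k, c) ∈ D → (k + 1, c) ∈ D →
      (f (k, c)).1 < (f (k + 1, c)).1 := by
    intro k c hk hk1
    have hne : (k, c) ≠ (k + 1, c) := by simp
    have hAR : AboveRight (k, c) (k + 1, c) := ⟨by omega, le_refl _⟩
    rcases hpic _ hk _ hk1 hne hAR with h | ⟨h1, h2⟩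
    · exact h
    · -- images in the same row of E, left one strictly left: contradiction
      exfalso
      have hfk : f (k, c) ∈ E := hf.mapsTo hk
      have hfk1 : f (k + 1, c) ∈ E := hf.mapsTo hk1
      have hne' : f (k + 1, c) ≠ f (k, c) := by
        intro h; rw [h] at h2; omega
      have hAR' : AboveRight (f (k + 1, c)) (f (k, c)) :=
        ⟨le_of_eq h1.symm, le_of_lt h2⟩
      have := hpic' _ hfk1 _ hfk hne' hAR'
      rw [hg.1 hk1, hg.1 hk] at this
      rcases this with h | ⟨h, _⟩ <;> omega
  constructor
  · -- rows
    intro A hA B hB h1 h2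
    by_cases hAB : A = B
    · subst hAB; exact le_refl _
    · have hAR : AboveRight B A := ⟨le_of_eq h1.symm, h2⟩
      have := hpic _ hB _ hA (Ne.symm hAB) hAR
      rcases this with h | ⟨h, _⟩ <;> omega
  · -- columns: induction on the row gap
    intro A hA B hB h1 h2
    obtain ⟨i, c⟩ := A
    obtain ⟨j, c'⟩ := B
    simp only at h1 h2 ⊢
    subst h1
    obtain ⟨n, rfl⟩ := Nat.exists_eq_add_of_le h2
    clear h2
    induction n with
    | zero => simp
    | succ n ih =>
      have hmid : (i + n, c) ∈ D := by
        rw [hD]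
        have h1 := (hD _).mp hA
        have h2 := (hD _).mp hB
        simp only at h1 h2 ⊢
        exact ⟨by omega, lt_of_lt_of_le h1.2 (hlen (by omega))⟩
      have hstep := step (i + n) c hmid (by rw [show i + n + 1 = i + (n+1) by ring]; exact hB)
      have hih := ih hmid
      rw [show i + (n + 1) = i + n + 1 by ring]
      have : (f (i + n, c)).1 + 1 ≤ (f (i + n + 1, c)).1 := hstep
      push_cast at hih ⊢
      omega
end

section
/- Let f be a picture from Young diagram λ to skew diagram E. For each box T = (i',j') of E, define its readiness number r(T) = i − i' where (i,j) = f^{-1}(T). Then in E the readiness numbers are weakly decreasing along each row (left to right) and weakly increasing down each column. -/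
/-- The defining condition of a picture, for one direction: a picture from `D` to `E` is a
bijection `f` with `AboveRightToLexOn f D` whose inverse `g` satisfies `AboveRightToLexOn g E`. -/
def AboveRightToLexOn (f : ℕ × ℕ → ℕ × ℕ) (S : Set (ℕ × ℕ)) : Prop :=
  ∀ A ∈ S, ∀ B ∈ S, A ≠ B → AboveRight A B → LexLt (f A) (f B)

def readiness (g : ℕ × ℕ → ℕ × ℕ) (T : ℕ × ℕ) : ℤ := (g T).1 - T.1

lemma LexLt.fst_le {A B : ℕ × ℕ} (h : LexLt A B) : A.1 ≤ B.1 := by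
  rcases h with h | ⟨h, -⟩ <;> omega

lemma not_lexLt_of_fst_lt {A B : ℕ × ℕ} (h : A.1 < B.1) : ¬ LexLt B A := by
  rintro (h' | ⟨h', -⟩) <;> omega

lemma mem_skewDiagram_of_le_of_le {rowsE : ℕ} {lamE muE : ℕ → ℕ} {E : Set (ℕ × ℕ)}
    (hlamE : Monotone lamE) (hmuE : Monotone muE)
    (hE : ∀ p : ℕ × ℕ, p ∈ E ↔ p.1 < rowsE ∧ muE p.1 ≤ p.2 ∧ p.2 < lamE p.1)
    {i j k c : ℕ} (hij : i ≤ j) (hjk : j ≤ k) (hi : (i, c) ∈ E) (hk : (k, c) ∈ E) :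
    (j, c) ∈ E := by
  rw [hE] at hi hk ⊢
  exact ⟨by omega, (hmuE hjk).trans hk.2.1, hi.2.2.trans_le (hlamE hij)⟩

section Picture

variable {D E : Set (ℕ × ℕ)} {f g : ℕ × ℕ → ℕ × ℕ}

lemma readiness_le_of_fst_eq_of_snd_le (hg : AboveRightToLexOn g E) {A B : ℕ × ℕ}
    (hA : A ∈ E) (hB : B ∈ E) (hrow : A.1 = B.1) (hcol : A.2 ≤ B.2) :
    readiness g B ≤ readiness g A := by
  obtain rfl | hAB := eq_or_ne A B
  · exact le_rfl
  have := (hg B hB A hA hAB.symm ⟨hrow.ge, hcol⟩).fst_le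
  unfold readiness
  omega

lemma fst_lt_of_fst_lt_of_snd_le (hf : AboveRightToLexOn f D) (hg : AboveRightToLexOn g E)
    (hgE : Set.MapsTo g E D) (hfg : Set.RightInvOn g f E) {A B : ℕ × ℕ}
    (hA : A ∈ E) (hB : B ∈ E) (hrow : A.1 < B.1) (hcol : B.2 ≤ A.2) :
    (g A).1 < (g B).1 := by
  rcases hg A hA B hB (fun h ↦ by subst h; omega) ⟨hrow.le, hcol⟩ with hlt | ⟨heq, hlt⟩
  · exact hlt
  · have hBA := hf (g B) (hgE hB) (g A) (hgE hA) (fun h ↦ by rw [h] at hlt; omega)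
      ⟨heq.ge, hlt.le⟩
    rw [hfg hB, hfg hA] at hBA
    exact absurd hBA (not_lexLt_of_fst_lt hrow)

lemma readiness_le_of_snd_eq_of_fst_le (hf : AboveRightToLexOn f D) (hg : AboveRightToLexOn g E)
    (hgE : Set.MapsTo g E D) (hfg : Set.RightInvOn g f E)
    (hconv : ∀ {i j k c : ℕ}, i ≤ j → j ≤ k → (i, c) ∈ E → (k, c) ∈ E → (j, c) ∈ E)
    {A B : ℕ × ℕ} (hA : A ∈ E) (hB : B ∈ E) (hcol : A.2 = B.2) (hrow : A.1 ≤ B.1) :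
    readiness g A ≤ readiness g B := by
  obtain ⟨a, c⟩ := A
  obtain ⟨b, c'⟩ := B
  obtain rfl : c = c' := hcol
  induction b, hrow using Nat.le_induction with
  | base => exact le_rfl
  | succ k hak ih =>
    have hk : (k, c) ∈ E := hconv hak k.le_succ hA hB
    have := fst_lt_of_fst_lt_of_snd_le hf hg hgE hfg hk hB k.lt_succ_self le_rfl
    have := ih hk
    unfold readiness at *
    omega

end Picture

theorem stmt12_general (rowsE : ℕ) (lamE muE : ℕ → ℕ)
    (hlamE : Monotone lamE) (hmuE : Monotone muE)
    (D E : Finset (ℕ × ℕ))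
    (hE : ∀ p : ℕ × ℕ, p ∈ E ↔ p.1 < rowsE ∧ muE p.1 ≤ p.2 ∧ p.2 < lamE p.1)
    (f g : ℕ × ℕ → ℕ × ℕ)
    (hf : Set.BijOn f ↑D ↑E) (hg : Set.InvOn g f ↑D ↑E)
    (hpic : ∀ A ∈ D, ∀ B ∈ D, A ≠ B → AboveRight A B → LexLt (f A) (f B))
    (hpic' : ∀ A ∈ E, ∀ B ∈ E, A ≠ B → AboveRight A B → LexLt (g A) (g B)) :
    (∀ A ∈ E, ∀ B ∈ E, A.1 = B.1 → A.2 ≤ B.2 →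
      ((g B).1 : ℤ) - B.1 ≤ ((g A).1 : ℤ) - A.1) ∧
    (∀ A ∈ E, ∀ B ∈ E, A.2 = B.2 → A.1 ≤ B.1 →
      ((g A).1 : ℤ) - A.1 ≤ ((g B).1 : ℤ) - B.1) := by
  have hgE : Set.MapsTo g ↑E ↑D := hg.1.mapsTo hf.surjOn
  have hconv {i j k c : ℕ} (hij : i ≤ j) (hjk : j ≤ k) (hi : (i, c) ∈ (E : Set (ℕ × ℕ)))
      (hk : (k, c) ∈ (E : Set (ℕ × ℕ))) : (j, c) ∈ (E : Set (ℕ × ℕ)) :=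
    mem_skewDiagram_of_le_of_le hlamE hmuE hE hij hjk hi hk
  exact ⟨fun A hA B hB ↦ readiness_le_of_fst_eq_of_snd_le hpic' hA hB,
    fun A hA B hB ↦ readiness_le_of_snd_eq_of_fst_le hpic hpic' hgE hg.2 hconv hA hB⟩

/-- Let `f` be a picture from a Young diagram `D` (rows given by
a weakly increasing length function) to a skew diagram `E = λ/μ` (row `i` of
`E` consists of boxes `(i, c)` with `muE i ≤ c < lamE i`, `lamE` and `muE`
weakly increasing).  For `T ∈ E` define its readiness number `(g T).1 − T.1`,
where `g = f⁻¹`.  Then in `E` the readiness numbers weakly decrease along each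
row (left to right) and weakly increase down each column. -/
theorem stmt12 (rows rowsE : ℕ) (len lamE muE : ℕ → ℕ)
    (hlen : Monotone len) (hlamE : Monotone lamE) (hmuE : Monotone muE)
    (hml : ∀ i, muE i ≤ lamE i)
    (D E : Finset (ℕ × ℕ))
    (hD : ∀ p : ℕ × ℕ, p ∈ D ↔ p.1 < rows ∧ p.2 < len p.1)
    (hE : ∀ p : ℕ × ℕ, p ∈ E ↔ p.1 < rowsE ∧ muE p.1 ≤ p.2 ∧ p.2 < lamE p.1)
    (f g : ℕ × ℕ → ℕ × ℕ)
    (hf : Set.BijOn f ↑D ↑E) (hg : Set.InvOn g f ↑D ↑E)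
    (hpic : ∀ A ∈ D, ∀ B ∈ D, A ≠ B → AboveRight A B → LexLt (f A) (f B))
    (hpic' : ∀ A ∈ E, ∀ B ∈ E, A ≠ B → AboveRight A B → LexLt (g A) (g B)) :
    (∀ A ∈ E, ∀ B ∈ E, A.1 = B.1 → A.2 ≤ B.2 →
      ((g B).1 : ℤ) - B.1 ≤ ((g A).1 : ℤ) - A.1) ∧
    (∀ A ∈ E, ∀ B ∈ E, A.2 = B.2 → A.1 ≤ B.1 →
      ((g A).1 : ℤ) - A.1 ≤ ((g B).1 : ℤ) - B.1) :=
  stmt12_general rowsE lamE muE hlamE hmuE D E hE f g hf hg hpic hpic'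
end

section
/- Consider the root game initial position associated to 0^{n-l}1^l-strings σ, μ, ν with parameter N (permutations π_1 = π(σ,N), π_2 = π'(μ,N), π_3 = π''(ν,N) in S_{n+N}). The squares containing a 1-token are exactly the squares S_{a, n-l+c} with 1 ≤ a ≤ n-l, 1 ≤ c ≤ r_a(σ), i.e., they form the Young diagram λ(σ) with lower-left corner at S_{n-l, n-l+1}. -/
/-!
Zero positions come first in `π(σ,N)` and one positions next, each block in increasing order, and
the last `N` entries are fixed points larger than everything before them. So an inversion pairs a
zero position `i a` with a later-placed one position `j c` satisfying `j c < i a`, and since `j` is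
increasing these `c` are exactly the first `r_a(σ)` indices.
-/

/-- The set of inversions of a word `f` on `Fin n`. -/
def Inversions {n : ℕ} (f : Fin n → Fin n) : Finset (Fin n × Fin n) :=
  Finset.univ.filter fun p => p.1 < p.2 ∧ f p.2 < f p.1

open Finset

theorem mem_inversions_iff {n : ℕ} {f : Fin n → Fin n} {a b : Fin n} :
    (a, b) ∈ Inversions f ↔ a < b ∧ f b < f a := by
  simp [Inversions]

theorem StrictMono.lt_card_filter_lt_iff {α : Type*} [LinearOrder α] {l : ℕ} {j : Fin l → α}
    (hj : StrictMono j) (x : α) (c : Fin l) :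
    (c : ℕ) < #{c' | j c' < x} ↔ j c < x := by
  constructor
  · intro hc
    by_contra! hxc
    have hsub : ({c' | j c' < x} : Finset (Fin l)) ⊆ Iio c := fun c' hc' => by
      simp only [mem_filter, mem_univ, true_and] at hc'
      exact mem_Iio.mpr (hj.lt_iff_lt.mp (hc'.trans_le hxc))
    have := card_le_card hsub
    rw [Fin.card_Iio] at this
    omega
  · intro hc
    have hsub : Iic c ⊆ ({c' | j c' < x} : Finset (Fin l)) := fun c' hc' => by
      simp only [mem_filter, mem_univ, true_and]
      exact (hj.monotone (mem_Iic.mp hc')).trans_lt hc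
    simpa [Fin.card_Iic] using card_le_card hsub

theorem card_filter_and_eq_card_filter_comp {β ι : Type*} [Fintype β] [Fintype ι]
    {j : ι → β} (hj : Function.Injective j) (P q : β → Prop)
    [DecidablePred P] [DecidablePred q]
    (hP : ∀ p, P p ↔ ∃ c, j c = p) :
    #{p | q p ∧ P p} = #{c | q (j c)} := by
  classical
  have himage : ({p | q p ∧ P p} : Finset β) = ({c | q (j c)} : Finset ι).image j := by
    ext p
    simp only [mem_filter, mem_univ, true_and, mem_image, hP]
    constructor
    · rintro ⟨hp, c, rfl⟩
      exact ⟨c, hp, rfl⟩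
    · rintro ⟨c, hc, rfl⟩
      exact ⟨hc, c, rfl⟩
  rw [himage, card_image_of_injective _ hj]

section BlockPermutation

variable {m l N : ℕ} {i : Fin m → Fin (m + l)} {j : Fin l → Fin (m + l)}
  {πN : Fin (m + l + N) → Fin (m + l + N)}
variable (hπN : ∀ a : Fin (m + l + N), (πN a : ℕ) =
      if h : (a : ℕ) < m + l then ((Fin.append i j ⟨a, h⟩ : Fin (m + l)) : ℕ)
      else (a : ℕ))
include hπN

theorem val_blockPerm_of_lt {a : Fin (m + l + N)} (ha : (a : ℕ) < m) :
    (πN a : ℕ) = i ⟨a, ha⟩ := by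
  rw [hπN, dif_pos (by omega)]
  exact congrArg Fin.val (Fin.append_left i j ⟨a, ha⟩)

theorem val_blockPerm_of_le_of_lt {a : Fin (m + l + N)} (ha : m ≤ (a : ℕ))
    (ha' : (a : ℕ) < m + l) : (πN a : ℕ) = j ⟨a - m, by omega⟩ := by
  rw [hπN, dif_pos ha']
  have : (⟨a, ha'⟩ : Fin (m + l)) = Fin.natAdd m ⟨a - m, by omega⟩ := by
    ext
    simp only [Fin.val_natAdd]
    omega
  rw [this, Fin.append_right]

theorem val_blockPerm_lt {a : Fin (m + l + N)} (ha : (a : ℕ) < m + l) :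
    (πN a : ℕ) < m + l := by
  rw [hπN, dif_pos ha]
  exact Fin.isLt _

theorem val_blockPerm_of_le {a : Fin (m + l + N)} (ha : m + l ≤ (a : ℕ)) :
    (πN a : ℕ) = a := by
  rw [hπN, dif_neg (by omega)]

theorem blocks_of_mem_inversions (hi : StrictMono i) (hj : StrictMono j)
    {a b : Fin (m + l + N)} (hab : (a, b) ∈ Inversions πN) :
    (a : ℕ) < m ∧ m ≤ (b : ℕ) ∧ (b : ℕ) < m + l := by
  obtain ⟨hab, hinv⟩ := mem_inversions_iff.mp hab
  rw [Fin.lt_def] at hab hinv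
  have hb : m ≤ (b : ℕ) := by
    by_contra! hb
    rw [val_blockPerm_of_lt hπN (hab.trans hb), val_blockPerm_of_lt hπN hb] at hinv
    exact hinv.not_gt (hi (Fin.mk_lt_mk.mpr hab))
  have hb' : (b : ℕ) < m + l := by
    by_contra! hb'
    rw [val_blockPerm_of_le hπN hb'] at hinv
    rcases lt_or_ge (a : ℕ) (m + l) with ha | ha
    · exact hinv.not_gt (by linarith [val_blockPerm_lt hπN ha])
    · rw [val_blockPerm_of_le hπN ha] at hinv
      omega
  refine ⟨?_, hb, hb'⟩
  by_contra! ha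
  rw [val_blockPerm_of_le_of_lt hπN ha (hab.trans hb'), val_blockPerm_of_le_of_lt hπN hb hb']
    at hinv
  exact hinv.not_gt (hj (Fin.mk_lt_mk.mpr (by omega)))

theorem val_blockPerm_lt_val_iff (hj : StrictMono j) {a b : Fin (m + l + N)}
    (ha : (a : ℕ) < m) (hb : m ≤ (b : ℕ)) (hb' : (b : ℕ) < m + l) :
    (πN b : ℕ) < πN a ↔ (b : ℕ) < m + #{c | j c < i ⟨a, ha⟩} := by
  rw [val_blockPerm_of_lt hπN ha, val_blockPerm_of_le_of_lt hπN hb hb', ← Fin.lt_def,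
    ← hj.lt_card_filter_lt_iff, Fin.val_mk]
  omega

end BlockPermutation

theorem stmt15_general (m l N : ℕ) (σ : Fin (m + l) → Bool)
    (i : Fin m → Fin (m + l)) (j : Fin l → Fin (m + l))
    (hi : StrictMono i) (hj : StrictMono j)
    (hone : ∀ p, σ p = true ↔ ∃ c, j c = p)
    (πN : Fin (m + l + N) → Fin (m + l + N))
    (hπN : ∀ a : Fin (m + l + N), (πN a : ℕ) =
      if h : (a : ℕ) < m + l then ((Fin.append i j ⟨a, h⟩ : Fin (m + l)) : ℕ)
      else (a : ℕ))
    (r : ℕ → ℕ)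
    (hr : ∀ (a : ℕ) (h : a < m),
      r a = (Finset.univ.filter fun p => p < i ⟨a, h⟩ ∧ σ p = true).card) :
    ∀ a b : Fin (m + l + N), (a, b) ∈ Inversions πN ↔
      ((a : ℕ) < m ∧ m ≤ (b : ℕ) ∧ (b : ℕ) < m + r (a : ℕ)) := by
  have hr_card (a : ℕ) (ha : a < m) : r a = #{c | j c < i ⟨a, ha⟩} :=
    (hr a ha).trans (card_filter_and_eq_card_filter_comp hj.injective _ _ hone)
  intro a b
  constructor
  · intro hab
    obtain ⟨ha, hb, hb'⟩ := blocks_of_mem_inversions hπN hi hj hab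
    rw [hr_card a ha]
    exact ⟨ha, hb,
      (val_blockPerm_lt_val_iff hπN hj ha hb hb').mp (mem_inversions_iff.mp hab).2⟩
  · rintro ⟨ha, hb, hbr⟩
    rw [hr_card a ha] at hbr
    have hb' : (b : ℕ) < m + l :=
      hbr.trans_le (Nat.add_le_add_left ((card_filter_le _ _).trans_eq (card_fin l)) m)
    rw [mem_inversions_iff, Fin.lt_def]
    exact ⟨by omega, (val_blockPerm_lt_val_iff hπN hj ha hb hb').mpr hbr⟩

/-- In the root game initial position, a `1`-token occupies
`S_{ab}` iff `(a,b)` is an inversion of `π₁ = π(σ,N)`.  These squares are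
exactly the `S_{a, m+c}` with `a < m` and `c < r_a(σ)` (0-based), i.e. they
form the Young diagram `λ(σ)`. -/
theorem stmt15 (m l N : ℕ) (σ : Fin (m + l) → Bool)
    (i : Fin m → Fin (m + l)) (j : Fin l → Fin (m + l))
    (hi : StrictMono i) (hj : StrictMono j)
    (hzero : ∀ p, σ p = false ↔ ∃ a, i a = p)
    (hone : ∀ p, σ p = true ↔ ∃ c, j c = p)
    (πN : Fin (m + l + N) → Fin (m + l + N))
    (hπN : ∀ a : Fin (m + l + N), (πN a : ℕ) =
      if h : (a : ℕ) < m + l then ((Fin.append i j ⟨a, h⟩ : Fin (m + l)) : ℕ)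
      else (a : ℕ))
    (r : ℕ → ℕ)
    (hr : ∀ (a : ℕ) (h : a < m),
      r a = (Finset.univ.filter fun p => p < i ⟨a, h⟩ ∧ σ p = true).card) :
    ∀ a b : Fin (m + l + N), (a, b) ∈ Inversions πN ↔
      ((a : ℕ) < m ∧ m ≤ (b : ℕ) ∧ (b : ℕ) < m + r (a : ℕ)) :=
  stmt15_general m l N σ i j hi hj hone πN hπN r hr
end

section
/- Consider the root game initial position for π_2 = π'(μ,N) where μ is a 0^{n-l}1^l-string. The squares containing a 2-token are exactly the squares S_{a, n-l+c} with 1 ≤ a ≤ n-l and 1 ≤ c ≤ N + r_a(μ); i.e., the 2-tokens form the Young diagram N + λ(μ) obtained by adding N boxes to every row (including empty rows) of λ(μ). -/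
/-- In the root game initial position for `π₂ = π'(μ,N)`, a
`2`-token occupies `S_{ab}` iff `(a,b)` is an inversion of `π'(μ,N)`.  These
squares are exactly `S_{a, m+c}` with `a < m` and `c < N + r_a(μ)` (0-based),
i.e. the `2`-tokens form the Young diagram `N + λ(μ)` obtained by adding `N`
boxes to every row of `λ(μ)`. -/
theorem stmt16 (m l N : ℕ) (μ : Fin (m + l) → Bool)
    (i : Fin m → Fin (m + l)) (j : Fin l → Fin (m + l))
    (hi : StrictMono i) (hj : StrictMono j)
    (hzero : ∀ p, μ p = false ↔ ∃ a, i a = p)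
    (hone : ∀ p, μ p = true ↔ ∃ c, j c = p)
    (π₂ : Fin (m + l + N) → Fin (m + l + N))
    (hπ₂ : ∀ a : Fin (m + l + N), (π₂ a : ℕ) =
      if h1 : (a : ℕ) < m then (i ⟨a, h1⟩ : ℕ) + N
      else if h2 : (a : ℕ) < m + N then (a : ℕ) - m
      else (j ⟨(a : ℕ) - m - N, by have := a.isLt; omega⟩ : ℕ) + N)
    (r : ℕ → ℕ)
    (hr : ∀ (a : ℕ) (h : a < m),
      r a = (Finset.univ.filter fun p => p < i ⟨a, h⟩ ∧ μ p = true).card) :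
    ∀ a b : Fin (m + l + N), (a, b) ∈ Inversions π₂ ↔
      ((a : ℕ) < m ∧ m ≤ (b : ℕ) ∧ (b : ℕ) < m + N + r (a : ℕ)) := by
  -- key: for `x < m` and `c : Fin l`, `j c < i x ↔ c < r x`.
  have key : ∀ (x : ℕ) (hx : x < m) (c : Fin l),
      ((j c : ℕ) < (i ⟨x, hx⟩ : ℕ) ↔ (c : ℕ) < r x) := by
    intro x hx c
    set ia := i ⟨x, hx⟩ with hia
    have hcard : r x = (Finset.univ.filter fun c' : Fin l => j c' < ia).card := by
      rw [hr x hx]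
      symm
      apply Finset.card_bij (fun c' _ => j c')
      · intro c' hc'
        simp only [Finset.mem_filter, Finset.mem_univ, true_and] at hc' ⊢
        exact ⟨hc', (hone (j c')).mpr ⟨c', rfl⟩⟩
      · intro c1 _ c2 _ h
        exact hj.injective h
      · intro p hp
        simp only [Finset.mem_filter, Finset.mem_univ, true_and] at hp
        obtain ⟨c', hc'⟩ := (hone p).mp hp.2
        exact ⟨c', by simp [hc', hia, hp.1]⟩
    constructor
    · intro hlt
      have hsub : Finset.Iic c ⊆ Finset.univ.filter fun c' : Fin l => j c' < ia := by
        intro c' hc'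
        simp only [Finset.mem_Iic] at hc'
        simp only [Finset.mem_filter, Finset.mem_univ, true_and]
        exact lt_of_le_of_lt (hj.monotone hc') (by exact_mod_cast Fin.lt_def.mpr hlt)
      have := Finset.card_le_card hsub
      rw [Fin.card_Iic] at this
      omega
    · intro hlt
      by_contra h
      push_neg at h
      have hsub : (Finset.univ.filter fun c' : Fin l => j c' < ia) ⊆ Finset.Iio c := by
        intro c' hc'
        simp only [Finset.mem_filter, Finset.mem_univ, true_and] at hc'
        simp only [Finset.mem_Iio]
        by_contra hcc
        push_neg at hcc
        have : (j c : ℕ) ≤ (j c' : ℕ) := by exact_mod_cast hj.monotone hcc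
        have : (j c' : ℕ) < (ia : ℕ) := by exact_mod_cast hc'
        omega
      have := Finset.card_le_card hsub
      rw [Fin.card_Iio] at this
      omega
  intro a b
  have hπa := hπ₂ a
  have hπb := hπ₂ b
  simp only [Inversions, Finset.mem_filter, Finset.mem_univ, true_and, Fin.lt_def]
  rcases lt_or_ge (a : ℕ) m with ha | ha
  · rw [dif_pos ha] at hπa
    rcases lt_or_ge (b : ℕ) m with hb | hb
    · rw [dif_pos hb] at hπb
      constructor
      · rintro ⟨hab, hba⟩
        exfalso
        have : (i ⟨(a : ℕ), ha⟩ : ℕ) < (i ⟨(b : ℕ), hb⟩ : ℕ) := by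
          exact_mod_cast hi (show (⟨(a:ℕ), ha⟩ : Fin m) < ⟨(b:ℕ), hb⟩ from hab)
        omega
      · rintro ⟨_, hmb, _⟩; omega
    · rcases lt_or_ge (b : ℕ) (m + N) with hb2 | hb2
      · rw [dif_neg (by omega), dif_pos hb2] at hπb
        exact ⟨fun _ => ⟨ha, hb, by omega⟩, fun _ => ⟨by omega, by omega⟩⟩
      · rw [dif_neg (by omega), dif_neg (by omega)] at hπb
        have hkey := key (a : ℕ) ha ⟨(b : ℕ) - m - N, by have := b.isLt; omega⟩
        simp only at hkey
        constructor
        · rintro ⟨hab, hba⟩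
          refine ⟨ha, hb, ?_⟩
          have : ((j ⟨(b : ℕ) - m - N, by have := b.isLt; omega⟩ : Fin (m + l)) : ℕ)
              < (i ⟨(a : ℕ), ha⟩ : ℕ) := by omega
          have := hkey.mp this
          omega
        · rintro ⟨_, _, hlt⟩
          have := hkey.mpr (by omega)
          exact ⟨by omega, by omega⟩
  · constructor
    · rintro ⟨hab, hba⟩
      exfalso
      rcases lt_or_ge (a : ℕ) (m + N) with ha2 | ha2
      · rw [dif_neg (by omega), dif_pos ha2] at hπa
        rcases lt_or_ge (b : ℕ) (m + N) with hb2 | hb2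
        · rw [dif_neg (by omega), dif_pos hb2] at hπb
          omega
        · rw [dif_neg (by omega), dif_neg (by omega)] at hπb
          omega
      · rw [dif_neg (by omega), dif_neg (by omega)] at hπa
        rw [dif_neg (by omega), dif_neg (by omega)] at hπb
        have hcc : (⟨(a : ℕ) - m - N, by have := a.isLt; omega⟩ : Fin l)
            < ⟨(b : ℕ) - m - N, by have := b.isLt; omega⟩ := by
          simp only [Fin.mk_lt_mk]; omega
        have h2 := hj hcc
        rw [Fin.lt_def] at h2
        omega
    · rintro ⟨h, _, _⟩; omega
end

section
/- Suppose in the Grassmannian root game the big region consists of the rectangle rows 1..(n-l) and columns (n-l+1)..(n+N), with 1-tokens forming λ₁ = λ(σ), 2-tokens forming λ₂ = N+λ(μ) ⊆ λ_{3̄}, and a picture f from λ₁ to λ_{3̄}/λ₂ given; assume N ≥ l. Then the Grassmannian root game algorithm (repeatedly: shift all unplaced 1-tokens up one row until some token is ready; then move the ready token in the row of the first ready empty square, scanning columns right to left and taking topmost empty squares, into that square) terminates with every square of λ_{3̄}/λ₂ containing exactly one 1-token. -/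
/-- Vertical move `(i,j)` (`i < j`) in the big region: every `1`-token in row
`j` moves up to row `i` whenever the destination square lies in the big region
(column length `lam3`) and is free of `1`-tokens. -/
def stepV (lam3 : ℕ → ℕ) (i j : ℕ) (C : Finset (ℕ × ℕ)) : Finset (ℕ × ℕ) :=
  (C \ C.filter fun p => p.1 = j ∧ p.2 < lam3 i ∧ (i, p.2) ∉ C) ∪
    (C.filter fun p => p.1 = j ∧ p.2 < lam3 i ∧ (i, p.2) ∉ C).image
      fun p => (i, p.2)

/-- Horizontal move `(i,j)` (`i < j`) in the big region: every `1`-token in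
column `i` moves right to column `j` whenever the destination square lies in
the big region and is free of `1`-tokens. -/
def stepH (lam3 : ℕ → ℕ) (i j : ℕ) (C : Finset (ℕ × ℕ)) : Finset (ℕ × ℕ) :=
  (C \ C.filter fun p => p.2 = i ∧ j < lam3 p.1 ∧ (p.1, j) ∉ C) ∪
    (C.filter fun p => p.2 = i ∧ j < lam3 p.1 ∧ (p.1, j) ∉ C).image
      fun p => (p.1, j)

/-- A root-game move of `1`-tokens within the big region (rows `0,…,m-1`,
columns `0,…,L-1`, row `a` having the `lam3 a` squares of `λ_{3̄}`). -/
def GameMove (m L : ℕ) (lam3 : ℕ → ℕ) (C C' : Finset (ℕ × ℕ)) : Prop :=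
  ∃ i j, i < j ∧
    ((j < m ∧ C' = stepV lam3 i j C) ∨ (j < L ∧ C' = stepH lam3 i j C))

namespace Stmt19


section
variable {m l N : ℕ} {lam1 lam2 lam3 : ℕ → ℕ}
variable {D1 Skew : Finset (ℕ × ℕ)} {f g : ℕ × ℕ → ℕ × ℕ}

/-- cells of a skew column form an interval of rows -/
lemma skew_col_interval (h2m : Monotone lam2) (h3m : Monotone lam3)
    (hSkew : ∀ p : ℕ × ℕ, p ∈ Skew ↔ p.1 < m ∧ lam2 p.1 ≤ p.2 ∧ p.2 < lam3 p.1)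
    {r1 r2 ρ j : ℕ} (h1 : (r1, j) ∈ Skew) (h2 : (r2, j) ∈ Skew)
    (hA : r1 ≤ ρ) (hB : ρ ≤ r2) : (ρ, j) ∈ Skew := by
  rw [hSkew] at h1 h2 ⊢
  refine ⟨lt_of_le_of_lt hB h2.1, le_trans (h2m hB) h2.2.1, lt_of_lt_of_le h1.2.2 (h3m hA)⟩

lemma d1_col_interval (h1m : Monotone lam1)
    (hD1 : ∀ p : ℕ × ℕ, p ∈ D1 ↔ p.1 < m ∧ p.2 < lam1 p.1)
    {b1 b2 ρ d : ℕ} (h1 : (b1, d) ∈ D1) (h2 : (b2, d) ∈ D1)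
    (hA : b1 ≤ ρ) (hB : ρ ≤ b2) : (ρ, d) ∈ D1 := by
  rw [hD1] at h1 h2 ⊢
  exact ⟨lt_of_le_of_lt hB h2.1, lt_of_lt_of_le h1.2 (h1m hA)⟩

/-- one-step strict increase of `g`-rows down a skew column -/
lemma gE1 (hf : Set.BijOn f ↑D1 ↑Skew) (hg : Set.InvOn g f ↑D1 ↑Skew)
    (hpic : ∀ A ∈ D1, ∀ B ∈ D1, A ≠ B → AboveRight A B → LexLt (f A) (f B))
    (hpic' : ∀ A ∈ Skew, ∀ B ∈ Skew, A ≠ B → AboveRight A B → LexLt (g A) (g B))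
    {r j : ℕ} (h1 : (r, j) ∈ Skew) (h2 : (r + 1, j) ∈ Skew) :
    (g (r, j)).1 < (g (r + 1, j)).1 := by
  have hne : ((r : ℕ), j) ≠ (r + 1, j) := by simp
  have hlex := hpic' _ h1 _ h2 hne ⟨Nat.le_succ r, le_refl j⟩
  rcases hlex with h | ⟨he, hc⟩
  · exact h
  · exfalso
    -- both g-images in the same D1 row; use hpic the other way
    have hg1 : g (r, j) ∈ D1 := by
      obtain ⟨x, hx, hfx⟩ := hf.2.2 (by exact_mod_cast h1)
      have : g ((r : ℕ), j) = x := by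
        rw [← hfx]; exact hg.1 hx
      rw [this]; exact_mod_cast hx
    have hg2 : g (r + 1, j) ∈ D1 := by
      obtain ⟨x, hx, hfx⟩ := hf.2.2 (by exact_mod_cast h2)
      have : g ((r : ℕ) + 1, j) = x := by
        rw [← hfx]; exact hg.1 hx
      rw [this]; exact_mod_cast hx
    have hne2 : g (r + 1, j) ≠ g (r, j) := by
      intro hEq
      have := congrArg f hEq
      rw [hg.2 (by exact_mod_cast h2), hg.2 (by exact_mod_cast h1)] at this
      simp at this
    have := hpic _ hg2 _ hg1 hne2 ⟨le_of_eq he.symm, le_of_lt hc⟩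
    rw [hg.2 (by exact_mod_cast h2), hg.2 (by exact_mod_cast h1)] at this
    rcases this with h | ⟨he2, _⟩
    · omega
    · simp at he2


lemma g_mem (hf : Set.BijOn f ↑D1 ↑Skew) (hg : Set.InvOn g f ↑D1 ↑Skew)
    {S : ℕ × ℕ} (hS : S ∈ Skew) : g S ∈ D1 := by
  obtain ⟨x, hx, hfx⟩ := hf.2.2 (by exact_mod_cast hS)
  have : g S = x := by rw [← hfx]; exact hg.1 hx
  rw [this]; exact_mod_cast hx

lemma f_mem (hf : Set.BijOn f ↑D1 ↑Skew) {A : ℕ × ℕ} (hA : A ∈ D1) : f A ∈ Skew := by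
  exact_mod_cast hf.1 (by exact_mod_cast hA)

lemma fg_eq (hg : Set.InvOn g f ↑D1 ↑Skew) {S : ℕ × ℕ} (hS : S ∈ Skew) : f (g S) = S :=
  hg.2 (by exact_mod_cast hS)

lemma gf_eq (hg : Set.InvOn g f ↑D1 ↑Skew) {A : ℕ × ℕ} (hA : A ∈ D1) : g (f A) = A :=
  hg.1 (by exact_mod_cast hA)

/-- weak decrease of `g`-rows rightwards along a skew row -/
lemma gE2 (hpic' : ∀ A ∈ Skew, ∀ B ∈ Skew, A ≠ B → AboveRight A B → LexLt (g A) (g B))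
    {r j1 j2 : ℕ} (h1 : (r, j1) ∈ Skew) (h2 : (r, j2) ∈ Skew) (hle : j1 ≤ j2) :
    (g (r, j2)).1 ≤ (g (r, j1)).1 := by
  rcases eq_or_lt_of_le hle with h | h
  · subst h; exact le_refl _
  · have := hpic' _ h2 _ h1 (by simp; omega) ⟨le_refl r, le_of_lt h⟩
    rcases this with h' | ⟨he, _⟩
    · exact le_of_lt h'
    · exact le_of_eq he

/-- one-step strict increase of `f`-rows down a D1 column -/
lemma fE3 (hf : Set.BijOn f ↑D1 ↑Skew) (hg : Set.InvOn g f ↑D1 ↑Skew)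
    (hpic : ∀ A ∈ D1, ∀ B ∈ D1, A ≠ B → AboveRight A B → LexLt (f A) (f B))
    (hpic' : ∀ A ∈ Skew, ∀ B ∈ Skew, A ≠ B → AboveRight A B → LexLt (g A) (g B))
    {b d : ℕ} (h1 : (b, d) ∈ D1) (h2 : (b + 1, d) ∈ D1) :
    (f (b, d)).1 < (f (b + 1, d)).1 := by
  have hne : ((b : ℕ), d) ≠ (b + 1, d) := by simp
  have hlex := hpic _ h1 _ h2 hne ⟨Nat.le_succ b, le_refl d⟩
  rcases hlex with h | ⟨he, hc⟩
  · exact h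
  · exfalso
    have hfs1 := f_mem hf h1
    have hfs2 := f_mem hf h2
    have hne2 : f (b + 1, d) ≠ f (b, d) := by
      intro hEq
      have := congrArg g hEq
      rw [gf_eq hg h2, gf_eq hg h1] at this
      simp at this
    have := hpic' _ hfs2 _ hfs1 hne2 ⟨le_of_eq he.symm, le_of_lt hc⟩
    rw [gf_eq hg h2, gf_eq hg h1] at this
    rcases this with h | ⟨he2, _⟩
    · omega
    · simp at he2

/-- chain version of gE1 down a skew column -/
lemma chain_gE1 (h2m : Monotone lam2) (h3m : Monotone lam3)
    (hSkew : ∀ p : ℕ × ℕ, p ∈ Skew ↔ p.1 < m ∧ lam2 p.1 ≤ p.2 ∧ p.2 < lam3 p.1)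
    (hf : Set.BijOn f ↑D1 ↑Skew) (hg : Set.InvOn g f ↑D1 ↑Skew)
    (hpic : ∀ A ∈ D1, ∀ B ∈ D1, A ≠ B → AboveRight A B → LexLt (f A) (f B))
    (hpic' : ∀ A ∈ Skew, ∀ B ∈ Skew, A ≠ B → AboveRight A B → LexLt (g A) (g B))
    {r1 r2 j : ℕ} (h1 : (r1, j) ∈ Skew) (h2 : (r2, j) ∈ Skew) (hle : r1 ≤ r2) :
    (g (r1, j)).1 + (r2 - r1) ≤ (g (r2, j)).1 := by
  obtain ⟨k, hk⟩ := Nat.exists_eq_add_of_le hle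
  subst hk
  induction k with
  | zero => simp
  | succ n ih =>
    rw [show r1 + (n+1) = r1 + n + 1 by omega] at h2 ⊢
    have hmid : (r1 + n, j) ∈ Skew :=
      skew_col_interval h2m h3m hSkew h1 h2 (by omega) (by omega)
    have hstep : (g (r1 + n, j)).1 < (g (r1 + n + 1, j)).1 :=
      gE1 hf hg hpic hpic' hmid h2
    have := ih hmid (by omega)
    omega

/-- chain version of fE3 down a D1 column -/
lemma chain_fE3 (h1m : Monotone lam1)
    (hD1 : ∀ p : ℕ × ℕ, p ∈ D1 ↔ p.1 < m ∧ p.2 < lam1 p.1)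
    (hf : Set.BijOn f ↑D1 ↑Skew) (hg : Set.InvOn g f ↑D1 ↑Skew)
    (hpic : ∀ A ∈ D1, ∀ B ∈ D1, A ≠ B → AboveRight A B → LexLt (f A) (f B))
    (hpic' : ∀ A ∈ Skew, ∀ B ∈ Skew, A ≠ B → AboveRight A B → LexLt (g A) (g B))
    {b1 b2 d : ℕ} (h1 : (b1, d) ∈ D1) (h2 : (b2, d) ∈ D1) (hle : b1 ≤ b2) :
    (f (b1, d)).1 + (b2 - b1) ≤ (f (b2, d)).1 := by
  obtain ⟨k, hk⟩ := Nat.exists_eq_add_of_le hle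
  subst hk
  induction k with
  | zero => simp
  | succ n ih =>
    rw [show b1 + (n+1) = b1 + n + 1 by omega] at h2 ⊢
    have hmid : (b1 + n, d) ∈ D1 :=
      d1_col_interval h1m hD1 h1 h2 (by omega) (by omega)
    have hstep : (f (b1 + n, d)).1 < (f (b1 + n + 1, d)).1 :=
      fE3 hf hg hpic hpic' hmid h2
    have := ih hmid (by omega)
    omega

/-- Claim A: every token's target row is weakly above it -/
lemma claimA (h1m : Monotone lam1)
    (hD1 : ∀ p : ℕ × ℕ, p ∈ D1 ↔ p.1 < m ∧ p.2 < lam1 p.1)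
    (hSkew : ∀ p : ℕ × ℕ, p ∈ Skew ↔ p.1 < m ∧ lam2 p.1 ≤ p.2 ∧ p.2 < lam3 p.1)
    (hf : Set.BijOn f ↑D1 ↑Skew) (hg : Set.InvOn g f ↑D1 ↑Skew)
    (hpic : ∀ A ∈ D1, ∀ B ∈ D1, A ≠ B → AboveRight A B → LexLt (f A) (f B))
    (hpic' : ∀ A ∈ Skew, ∀ B ∈ Skew, A ≠ B → AboveRight A B → LexLt (g A) (g B)) :
    ∀ A ∈ D1, (f A).1 ≤ A.1 := by
  suffices h : ∀ k, ∀ A ∈ D1, m - A.1 ≤ k → (f A).1 ≤ A.1 by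
    intro A hA; exact h m A hA (by omega)
  intro k
  induction k with
  | zero =>
    intro A hA hk
    have := (hD1 A).1 hA
    omega
  | succ n ih =>
    intro A hA hk
    by_contra hcon
    push_neg at hcon
    have hfA := f_mem hf hA
    have hfm : (f A).1 < m := ((hSkew _).1 hfA).1
    have hB : (A.1 + 1, A.2) ∈ D1 := by
      rw [hD1]
      have := (hD1 A).1 hA
      constructor
      · omega
      · exact lt_of_lt_of_le this.2 (h1m (Nat.le_succ _))
    have hA' : ((A.1 : ℕ), A.2) ∈ D1 := by simpa using hA
    have hstep := fE3 hf hg hpic hpic' hA' hB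
    have hih := ih _ hB (by omega)
    simp at hstep hih
    omega

/-- g-side of claim A -/
lemma claimA_g (h1m : Monotone lam1)
    (hD1 : ∀ p : ℕ × ℕ, p ∈ D1 ↔ p.1 < m ∧ p.2 < lam1 p.1)
    (hSkew : ∀ p : ℕ × ℕ, p ∈ Skew ↔ p.1 < m ∧ lam2 p.1 ≤ p.2 ∧ p.2 < lam3 p.1)
    (hf : Set.BijOn f ↑D1 ↑Skew) (hg : Set.InvOn g f ↑D1 ↑Skew)
    (hpic : ∀ A ∈ D1, ∀ B ∈ D1, A ≠ B → AboveRight A B → LexLt (f A) (f B))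
    (hpic' : ∀ A ∈ Skew, ∀ B ∈ Skew, A ≠ B → AboveRight A B → LexLt (g A) (g B)) :
    ∀ S ∈ Skew, S.1 ≤ (g S).1 := by
  intro S hS
  have := claimA h1m hD1 hSkew hf hg hpic hpic' (g S) (g_mem hf hg hS)
  rwa [fg_eq hg hS] at this

/-- the per-(row, epoch)-class counts of tokens and cells agree globally -/
lemma class_card (hf : Set.BijOn f ↑D1 ↑Skew) (hg : Set.InvOn g f ↑D1 ↑Skew)
    (ρ E : ℕ) :
    (D1.filter (fun A => A.1 = ρ + E ∧ (f A).1 = ρ)).card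
      = (Skew.filter (fun S => S.1 = ρ ∧ (g S).1 = ρ + E)).card := by
  apply Finset.card_bij (fun A _ => f A)
  · intro A hA
    simp only [Finset.mem_filter] at hA ⊢
    refine ⟨f_mem hf hA.1, hA.2.2, ?_⟩
    rw [gf_eq hg hA.1, hA.2.1]
  · intro A hA B hB hEq
    simp only [Finset.mem_filter] at hA hB
    have := congrArg g hEq
    rwa [gf_eq hg hA.1, gf_eq hg hB.1] at this
  · intro S hS
    simp only [Finset.mem_filter] at hS
    refine ⟨g S, ?_, fg_eq hg hS.1⟩
    simp only [Finset.mem_filter]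
    refine ⟨g_mem hf hg hS.1, hS.2.2, ?_⟩
    rw [fg_eq hg hS.1, hS.2.1]

lemma tot_card (hf : Set.BijOn f ↑D1 ↑Skew) (hg : Set.InvOn g f ↑D1 ↑Skew) :
    Skew.card = D1.card := by
  apply (Finset.card_bij (fun S _ => g S) ?_ ?_ ?_)
  · intro S hS; exact g_mem hf hg hS
  · intro A hA B hB hEq
    have := congrArg f hEq
    rwa [fg_eq hg hA, fg_eq hg hB] at this
  · intro A hA
    exact ⟨f A, f_mem hf hA, gf_eq hg hA⟩

end

/-! ## State and invariant -/

/-- the position of an unflown token originally at `A`, after `e` upward shifts -/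
def shiftPos (e : ℕ) (A : ℕ × ℕ) : ℕ × ℕ := (A.1 - e, A.2)

/-- configuration: filled cells `Q` plus unflown tokens `U` shifted up by `e` -/
def conf (e : ℕ) (Q U : Finset (ℕ × ℕ)) : Finset (ℕ × ℕ) :=
  Q ∪ U.image (shiftPos e)

section
variable {m l N : ℕ} {lam1 lam2 lam3 : ℕ → ℕ}
variable {D1 Skew : Finset (ℕ × ℕ)} {f g : ℕ × ℕ → ℕ × ℕ}

/-- The invariant maintained by the algorithm at epoch `e`. -/
structure Inv (Skew D1 : Finset (ℕ × ℕ)) (f g : ℕ × ℕ → ℕ × ℕ)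
    (e : ℕ) (Q U : Finset (ℕ × ℕ)) : Prop where
  hQ : Q ⊆ Skew
  hU : U ⊆ D1
  filled_lt : ∀ S ∈ Skew, (g S).1 < S.1 + e → S ∈ Q
  q_le : ∀ S ∈ Q, (g S).1 ≤ S.1 + e
  u_ge : ∀ A ∈ U, (f A).1 + e ≤ A.1
  count : ∀ ρ : ℕ, (U.filter (fun A => A.1 = ρ + e ∧ (f A).1 = ρ)).card
      = ((Skew \ Q).filter (fun S => S.1 = ρ ∧ (g S).1 = ρ + e)).card
  unflown : ∀ A ∈ D1, A.1 > (f A).1 + e → A ∈ U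
  tot : (Skew \ Q).card = U.card

/-- initial invariant -/
lemma inv_init (h1m : Monotone lam1)
    (hD1 : ∀ p : ℕ × ℕ, p ∈ D1 ↔ p.1 < m ∧ p.2 < lam1 p.1)
    (hSkew : ∀ p : ℕ × ℕ, p ∈ Skew ↔ p.1 < m ∧ lam2 p.1 ≤ p.2 ∧ p.2 < lam3 p.1)
    (hf : Set.BijOn f ↑D1 ↑Skew) (hg : Set.InvOn g f ↑D1 ↑Skew)
    (hpic : ∀ A ∈ D1, ∀ B ∈ D1, A ≠ B → AboveRight A B → LexLt (f A) (f B))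
    (hpic' : ∀ A ∈ Skew, ∀ B ∈ Skew, A ≠ B → AboveRight A B → LexLt (g A) (g B)) :
    Inv Skew D1 f g 0 ∅ D1 where
  hQ := by simp
  hU := le_refl _
  filled_lt := by
    intro S hS h
    exact absurd (claimA_g h1m hD1 hSkew hf hg hpic hpic' S hS) (by omega)
  q_le := by simp
  u_ge := by
    intro A hA
    simpa using claimA h1m hD1 hSkew hf hg hpic hpic' A hA
  count := by
    intro ρ
    simpa using class_card hf hg ρ 0
  unflown := by intro A hA _; exact hA
  tot := by simpa using tot_card hf hg


/-- FLIGHT STEP: if some cell of the current epoch is unfilled, one horizontal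
move fills at least one such cell, preserving the invariant. -/
lemma flight (hN : l ≤ N)
    (h1m : Monotone lam1) (h2m : Monotone lam2) (h3m : Monotone lam3)
    (h1l : ∀ a, lam1 a ≤ l) (h2N : ∀ a, N ≤ lam2 a)
    (h23 : ∀ a, lam2 a ≤ lam3 a) (h3 : ∀ a, lam3 a ≤ l + N)
    (hD1 : ∀ p : ℕ × ℕ, p ∈ D1 ↔ p.1 < m ∧ p.2 < lam1 p.1)
    (hSkew : ∀ p : ℕ × ℕ, p ∈ Skew ↔ p.1 < m ∧ lam2 p.1 ≤ p.2 ∧ p.2 < lam3 p.1)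
    (hf : Set.BijOn f ↑D1 ↑Skew) (hg : Set.InvOn g f ↑D1 ↑Skew)
    (hpic : ∀ A ∈ D1, ∀ B ∈ D1, A ≠ B → AboveRight A B → LexLt (f A) (f B))
    (hpic' : ∀ A ∈ Skew, ∀ B ∈ Skew, A ≠ B → AboveRight A B → LexLt (g A) (g B))
    {e : ℕ} {Q U : Finset (ℕ × ℕ)} (hinv : Inv Skew D1 f g e Q U)
    (hne : ((Skew \ Q).filter (fun S => (g S).1 = S.1 + e)).Nonempty) :
    ∃ Q' U', GameMove m (l + N) lam3 (conf e Q U) (conf e Q' U') ∧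
      Inv Skew D1 f g e Q' U' ∧ (Skew \ Q').card < (Skew \ Q).card := by
  classical
  set T : Finset (ℕ × ℕ) := (Skew \ Q).filter (fun S => (g S).1 = S.1 + e) with hT
  -- the rightmost column with an unfilled epoch-e cell
  have hTim : (T.image Prod.snd).Nonempty := hne.image _
  set j : ℕ := (T.image Prod.snd).max' hTim with hj
  have hjmax : ∀ S ∈ T, S.2 ≤ j := by
    intro S hS
    exact Finset.le_max' _ _ (Finset.mem_image_of_mem _ hS)
  have hjmem : ∃ S ∈ T, S.2 = j := by
    have := (T.image Prod.snd).max'_mem hTim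
    rw [Finset.mem_image] at this
    obtain ⟨S, hS, hSe⟩ := this
    exact ⟨S, hS, by rw [hSe]⟩
  set Tj : Finset (ℕ × ℕ) := T.filter (fun S => S.2 = j) with hTj
  have hTjne : Tj.Nonempty := by
    obtain ⟨S, hS, hSe⟩ := hjmem
    exact ⟨S, by simp [hTj, Finset.mem_filter, hS, hSe]⟩
  have hTjim : (Tj.image Prod.fst).Nonempty := hTjne.image _
  set r : ℕ := (Tj.image Prod.fst).min' hTjim with hr
  have hrmin : ∀ S ∈ T, S.2 = j → r ≤ S.1 := by
    intro S hS hSe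
    exact Finset.min'_le _ _ (Finset.mem_image_of_mem _ (by simp [hTj, Finset.mem_filter, hS, hSe]))
  have hrjT : ((r : ℕ), j) ∈ T := by
    have := (Tj.image Prod.fst).min'_mem hTjim
    rw [Finset.mem_image] at this
    obtain ⟨S, hS, hSe⟩ := this
    rw [hTj, Finset.mem_filter] at hS
    have : S = (r, j) := by
      rw [Prod.ext_iff]; exact ⟨hSe, hS.2⟩
    rw [← this]; exact hS.1
  rw [hT, Finset.mem_filter, Finset.mem_sdiff] at hrjT
  obtain ⟨⟨hrjS, hrjQ⟩, hgrj⟩ := hrjT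
  have hrjS' := (hSkew _).1 hrjS
  simp only at hrjS' hgrj
  -- the flyer
  have hflyer : (U.filter (fun A => A.1 = r + e ∧ (f A).1 = r)).Nonempty := by
    rw [← Finset.card_pos, hinv.count r, Finset.card_pos]
    refine ⟨(r, j), ?_⟩
    rw [Finset.mem_filter, Finset.mem_sdiff]
    exact ⟨⟨hrjS, hrjQ⟩, rfl, hgrj⟩
  obtain ⟨A0, hA0⟩ := hflyer
  rw [Finset.mem_filter] at hA0
  obtain ⟨hA0U, hA01, hA0f⟩ := hA0
  set c : ℕ := A0.2 with hc
  have hA0D : A0 ∈ D1 := hinv.hU hA0U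
  have hcl : c < l := lt_of_lt_of_le ((hD1 A0).1 hA0D).2 (h1l _)
  have hjN : N ≤ j := le_trans (h2N r) hrjS'.2.1
  have hcj : c < j := by omega
  have hjL : j < l + N := lt_of_lt_of_le hrjS'.2.2 (h3 r)
  -- columns facts
  have hUcol : ∀ A ∈ U, A.2 < l := fun A hA =>
    lt_of_lt_of_le ((hD1 A).1 (hinv.hU hA)).2 (h1l _)
  have hQcol : ∀ S ∈ Q, l ≤ S.2 := fun S hS =>
    le_trans (le_trans hN (h2N S.1)) ((hSkew S).1 (hinv.hQ hS)).2.1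
  have hUge : ∀ A ∈ U, e ≤ A.1 := fun A hA => le_trans (by omega) (hinv.u_ge A hA)
  -- the set of movers
  set M : Finset (ℕ × ℕ) :=
    U.filter (fun A => A.2 = c ∧ j < lam3 (A.1 - e) ∧ (A.1 - e, j) ∉ Q) with hM
  have hMU : M ⊆ U := Finset.filter_subset _ _
  -- key facts about movers
  have factM : ∀ A ∈ M, r + e ≤ A.1 ∧ (f A).1 + e = A.1 ∧
      ((A.1 - e, j) ∈ Skew ∧ (g (A.1 - e, j)).1 = (A.1 - e) + e) := by
    intro A hA
    rw [hM, Finset.mem_filter] at hA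
    obtain ⟨hAU, hAc, hAlam, hAQ⟩ := hA
    have hAe : e ≤ A.1 := hUge A hAU
    have hAD : A ∈ D1 := hinv.hU hAU
    set ρA : ℕ := A.1 - e with hρA
    -- Step 1 : ρA ≥ r
    have hstep1 : r ≤ ρA := by
      by_contra hlt
      push_neg at hlt
      have hmemS : ((ρA : ℕ), j) ∈ Skew := by
        rw [hSkew]
        refine ⟨by omega, le_trans (h2m (le_of_lt hlt)) hrjS'.2.1, hAlam⟩
      have hchain := chain_gE1 h2m h3m hSkew hf hg hpic hpic' hmemS hrjS (le_of_lt hlt)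
      rw [hgrj] at hchain
      rcases lt_or_eq_of_le (show (g ((ρA : ℕ), j)).1 ≤ ρA + e by omega) with hlt2 | heq2
      · exact hAQ (hinv.filled_lt _ hmemS hlt2)
      · have : ((ρA : ℕ), j) ∈ T := by
          rw [hT, Finset.mem_filter, Finset.mem_sdiff]
          exact ⟨⟨hmemS, hAQ⟩, heq2⟩
        have := hrmin _ this rfl
        simp only at this
        omega
    -- Step 2 : readiness
    have hstep2 : (f A).1 + e = A.1 := by
      have hA0eq : A0 = ((r + e : ℕ), c) := by
        rw [Prod.ext_iff]; exact ⟨hA01, rfl⟩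
      have hAeq : A = ((A.1 : ℕ), c) := by
        rw [Prod.ext_iff]; exact ⟨rfl, hAc⟩
      have hchain : (f ((r + e : ℕ), c)).1 + (A.1 - (r + e)) ≤ (f ((A.1 : ℕ), c)).1 := by
        refine chain_fE3 h1m hD1 hf hg hpic hpic' ?_ ?_ (by omega)
        · rw [← hA0eq]; exact hA0D
        · rw [← hAeq]; exact hAD
      rw [← hA0eq, ← hAeq] at hchain
      rw [hA0f] at hchain
      have := hinv.u_ge A hAU
      omega
    refine ⟨by omega, hstep2, ?_⟩
    -- witness cell in row ρA
    have hwit : ((Skew \ Q).filter (fun S => S.1 = ρA ∧ (g S).1 = ρA + e)).Nonempty := by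
      rw [← Finset.card_pos, ← hinv.count ρA, Finset.card_pos]
      exact ⟨A, by rw [Finset.mem_filter]; exact ⟨hAU, by omega, by omega⟩⟩
    obtain ⟨S, hS⟩ := hwit
    rw [Finset.mem_filter, Finset.mem_sdiff] at hS
    obtain ⟨⟨hSS, hSQ⟩, hS1, hSg⟩ := hS
    have hST : S ∈ T := by
      rw [hT, Finset.mem_filter, Finset.mem_sdiff]
      exact ⟨⟨hSS, hSQ⟩, by omega⟩
    have hSy := hjmax S hST
    have hSeq : S = ((ρA : ℕ), S.2) := by rw [Prod.ext_iff]; exact ⟨hS1, rfl⟩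
    have hSS' : ((ρA : ℕ), S.2) ∈ Skew := by rw [← hSeq]; exact hSS
    have hmemS : ((ρA : ℕ), j) ∈ Skew := by
      rw [hSkew]
      refine ⟨by rw [hSkew] at hSS'; exact hSS'.1, ?_, hAlam⟩
      exact le_trans (by rw [hSkew] at hSS'; exact hSS'.2.1) hSy
    refine ⟨hmemS, le_antisymm ?_ ?_⟩
    · -- ≤ : via the witness and gE2
      have := gE2 hpic' hSS' hmemS hSy
      rw [← hSeq] at this
      omega
    · -- ≥ : via chain from (r,j)
      have := chain_gE1 h2m h3m hSkew hf hg hpic hpic' hrjS hmemS hstep1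
      rw [hgrj] at this
      omega
  -- landed cells
  set ψ : ℕ × ℕ → ℕ × ℕ := fun A => (A.1 - e, j) with hψ
  set landed : Finset (ℕ × ℕ) := M.image ψ with hlanded
  have hinjM : ∀ A ∈ M, ∀ B ∈ M, ψ A = ψ B → A = B := by
    intro A hA B hB hEq
    rw [hM, Finset.mem_filter] at hA hB
    have h1 : e ≤ A.1 := hUge A hA.1
    have h2 : e ≤ B.1 := hUge B hB.1
    rw [hψ, Prod.ext_iff] at hEq
    simp only at hEq
    rw [Prod.ext_iff]
    constructor
    · omega
    · rw [hA.2.1, hB.2.1]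
  have hinjM' : ∀ A ∈ U, ∀ B ∈ U, shiftPos e A = shiftPos e B → A = B := by
    intro A hA B hB hEq
    have h1 : e ≤ A.1 := hUge A hA
    have h2 : e ≤ B.1 := hUge B hB
    rw [shiftPos, shiftPos, Prod.ext_iff] at hEq
    simp only at hEq
    rw [Prod.ext_iff]
    exact ⟨by omega, hEq.2⟩
  have hlandedsub : landed ⊆ Skew \ Q := by
    intro p hp
    rw [hlanded, Finset.mem_image] at hp
    obtain ⟨A, hA, hpe⟩ := hp
    obtain ⟨_, _, h3', h4'⟩ := factM A hA
    rw [Finset.mem_sdiff, ← hpe]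
    refine ⟨h3', ?_⟩
    rw [hM, Finset.mem_filter] at hA
    exact hA.2.2.2
  have hcardlanded : landed.card = M.card := Finset.card_image_of_injOn hinjM
  set Q' : Finset (ℕ × ℕ) := Q ∪ landed with hQ'
  set U' : Finset (ℕ × ℕ) := U \ M with hU'
  refine ⟨Q', U', ?_, ?_, ?_⟩
  · -- the move
    refine ⟨c, j, hcj, Or.inr ⟨hjL, ?_⟩⟩
    set P : Finset (ℕ × ℕ) := conf e Q U with hP
    have hPdef : P = Q ∪ U.image (shiftPos e) := rfl
    have hQP : Q ⊆ P := by rw [hPdef]; exact Finset.subset_union_left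
    have hstepF : P.filter (fun p => p.2 = c ∧ j < lam3 p.1 ∧ (p.1, j) ∉ P)
        = M.image (shiftPos e) := by
      ext p
      rw [Finset.mem_filter, Finset.mem_image]
      constructor
      · rintro ⟨hpP, hpc, hplam, hpj⟩
        rw [hPdef, Finset.mem_union] at hpP
        rcases hpP with hpQ | hpU
        · exact absurd (hQcol p hpQ) (by omega)
        · rw [Finset.mem_image] at hpU
          obtain ⟨A, hAU, hAe⟩ := hpU
          refine ⟨A, ?_, hAe⟩
          rw [hM, Finset.mem_filter]
          have h1 : A.1 - e = p.1 := by rw [← hAe]; rfl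
          have h2 : A.2 = p.2 := by rw [← hAe]; rfl
          refine ⟨hAU, by omega, by rw [h1]; exact hplam, ?_⟩
          rw [h1]
          intro hmem
          exact hpj (hQP hmem)
      · rintro ⟨A, hAM, hAe⟩
        have hAM' := hAM
        rw [hM, Finset.mem_filter] at hAM'
        obtain ⟨hAU, hAc, hAlam, hAQ⟩ := hAM'
        have h1 : A.1 - e = p.1 := by rw [← hAe]; rfl
        have h2 : A.2 = p.2 := by rw [← hAe]; rfl
        refine ⟨?_, by omega, by rw [← h1]; exact hAlam, ?_⟩
        · rw [hPdef, Finset.mem_union, Finset.mem_image]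
          exact Or.inr ⟨A, hAU, hAe⟩
        · rw [hPdef, Finset.mem_union, Finset.mem_image]
          rintro (hj1 | ⟨B, hBU, hBe⟩)
          · rw [← h1] at hj1; exact hAQ hj1
          · have hBj : B.2 = j := by
              have := congrArg Prod.snd hBe
              simpa [shiftPos] using this
            have := hUcol B hBU
            omega
    have hsdiff : P \ M.image (shiftPos e) = Q ∪ (U \ M).image (shiftPos e) := by
      ext p
      simp only [hPdef, Finset.mem_sdiff, Finset.mem_union, Finset.mem_image]
      constructor
      · rintro ⟨hpQ | ⟨A, hAU, hAe⟩, hnot⟩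
        · exact Or.inl hpQ
        · exact Or.inr ⟨A, ⟨hAU, fun hAM => hnot ⟨A, hAM, hAe⟩⟩, hAe⟩
      · rintro (hpQ | ⟨A, ⟨hAU1, hAM1⟩, hAe⟩)
        · refine ⟨Or.inl hpQ, ?_⟩
          rintro ⟨B, hBM, hBe⟩
          have hBU := hMU hBM
          have hB2 : B.2 = p.2 := by rw [← hBe]; rfl
          have := hUcol B hBU
          have := hQcol p hpQ
          omega
        · refine ⟨Or.inr ⟨A, hAU1, hAe⟩, ?_⟩
          rintro ⟨B, hBM, hBe⟩
          have : B = A := hinjM' B (hMU hBM) A hAU1 (by rw [hBe, hAe])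
          exact hAM1 (this ▸ hBM)
    have himg : (M.image (shiftPos e)).image (fun p => (p.1, j)) = landed := by
      rw [hlanded, Finset.image_image]
      rfl
    show conf e Q' U' = stepH lam3 c j P
    rw [stepH, hstepF, hsdiff, himg]
    ext p
    rw [conf, hQ', hU']
    simp only [Finset.mem_union]
    tauto
  · -- the invariant
    have hQ'sub : Q' ⊆ Skew := by
      rw [hQ']
      intro p hp
      rw [Finset.mem_union] at hp
      rcases hp with hp | hp
      · exact hinv.hQ hp
      · exact (Finset.mem_sdiff.1 (hlandedsub hp)).1
    refine ⟨hQ'sub, le_trans (Finset.sdiff_subset) hinv.hU, ?_, ?_, ?_, ?_, ?_, ?_⟩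
    · intro S hS h
      exact Finset.mem_union_left _ (hinv.filled_lt S hS h)
    · intro S hS
      rw [hQ', Finset.mem_union] at hS
      rcases hS with hS | hS
      · exact hinv.q_le S hS
      · rw [hlanded, Finset.mem_image] at hS
        obtain ⟨A, hAM, hAe⟩ := hS
        obtain ⟨_, _, _, h4'⟩ := factM A hAM
        rw [← hAe]
        simp [hψ, h4']
    · intro A hA
      exact hinv.u_ge A (Finset.mem_sdiff.1 hA).1
    · intro ρ
      have hUsplit : U'.filter (fun A => A.1 = ρ + e ∧ (f A).1 = ρ)
          = (U.filter (fun A => A.1 = ρ + e ∧ (f A).1 = ρ))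
            \ (M.filter (fun A => A.1 = ρ + e ∧ (f A).1 = ρ)) := by
        ext A
        rw [hU']
        simp only [Finset.mem_filter, Finset.mem_sdiff]
        tauto
      have hQsplit : (Skew \ Q').filter (fun S => S.1 = ρ ∧ (g S).1 = ρ + e)
          = ((Skew \ Q).filter (fun S => S.1 = ρ ∧ (g S).1 = ρ + e))
            \ (landed.filter (fun S => S.1 = ρ ∧ (g S).1 = ρ + e)) := by
        ext S
        have := @hlandedsub S
        rw [hQ']
        simp only [Finset.mem_filter, Finset.mem_sdiff, Finset.mem_union] at this ⊢
        tauto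
      have hkey : (landed.filter (fun S => S.1 = ρ ∧ (g S).1 = ρ + e))
          = (M.filter (fun A => A.1 = ρ + e ∧ (f A).1 = ρ)).image ψ := by
        ext p
        rw [Finset.mem_filter, hlanded, Finset.mem_image, Finset.mem_image]
        constructor
        · rintro ⟨⟨A, hAM, hAe⟩, hp1, hp2⟩
          refine ⟨A, ?_, hAe⟩
          rw [Finset.mem_filter]
          obtain ⟨_, h2', _, _⟩ := factM A hAM
          have hAe1 : A.1 - e = p.1 := by rw [← hAe]
          have he : e ≤ A.1 := hUge A (hMU hAM)
          exact ⟨hAM, by omega, by omega⟩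
        · rintro ⟨A, hAf, hAe⟩
          rw [Finset.mem_filter] at hAf
          obtain ⟨hAM, hA1, hA2⟩ := hAf
          obtain ⟨_, _, _, h4'⟩ := factM A hAM
          have hAe1 : A.1 - e = p.1 := by rw [← hAe]
          have hAe2 : p.2 = j := by rw [← hAe]
          refine ⟨⟨A, hAM, hAe⟩, by omega, ?_⟩
          have hpe : p = ((A.1 - e : ℕ), j) := by
            rw [Prod.ext_iff]; exact ⟨by omega, hAe2⟩
          rw [hpe]
          omega
      have hsub1 : (M.filter (fun A => A.1 = ρ + e ∧ (f A).1 = ρ))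
          ⊆ (U.filter (fun A => A.1 = ρ + e ∧ (f A).1 = ρ)) :=
        Finset.filter_subset_filter _ hMU
      have hsub2 : (landed.filter (fun S => S.1 = ρ ∧ (g S).1 = ρ + e))
          ⊆ ((Skew \ Q).filter (fun S => S.1 = ρ ∧ (g S).1 = ρ + e)) :=
        Finset.filter_subset_filter _ hlandedsub
      rw [hUsplit, hQsplit, Finset.card_sdiff_of_subset hsub1, Finset.card_sdiff_of_subset hsub2,
        hinv.count ρ, hkey, Finset.card_image_of_injOn
          (fun A hA B hB => hinjM A (Finset.mem_filter.1 hA).1 B (Finset.mem_filter.1 hB).1)]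
    · intro A hA h
      rw [hU', Finset.mem_sdiff]
      refine ⟨hinv.unflown A hA h, fun hAM => ?_⟩
      obtain ⟨_, h2', _, _⟩ := factM A hAM
      omega
    · have h1 : (Skew \ Q') = (Skew \ Q) \ landed := by
        ext S
        have := @hlandedsub S
        rw [hQ']
        simp only [Finset.mem_sdiff, Finset.mem_union] at this ⊢
        tauto
      rw [h1, Finset.card_sdiff_of_subset hlandedsub, hU', Finset.card_sdiff_of_subset hMU,
        hinv.tot, hcardlanded]
  · -- progress
    have hA0M : A0 ∈ M := by
      rw [hM, Finset.mem_filter]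
      refine ⟨hA0U, rfl, ?_, ?_⟩
      · rw [show A0.1 - e = r by omega]; exact hrjS'.2.2
      · rw [show A0.1 - e = r by omega]; exact hrjQ
    have hlne : landed.Nonempty := ⟨ψ A0, Finset.mem_image_of_mem _ hA0M⟩
    have h1 : (Skew \ Q') = (Skew \ Q) \ landed := by
      ext S
      have := @hlandedsub S
      rw [hQ']
      simp only [Finset.mem_sdiff, Finset.mem_union] at this ⊢
      tauto
    rw [h1, Finset.card_sdiff_of_subset hlandedsub]
    have h2 : 0 < landed.card := Finset.card_pos.2 hlne
    have h3 : landed.card ≤ (Skew \ Q).card := Finset.card_le_card hlandedsub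
    have h4 : 0 < (Skew \ Q).card := by
      obtain ⟨S, hS⟩ := hne
      exact Finset.card_pos.2 ⟨S, (Finset.mem_filter.1 hS).1⟩
    omega

/-- CASCADE: when every unfilled cell has a later epoch, shift all unflown
tokens up one row (a sequence of vertical moves), incrementing the epoch. -/
lemma cascade (hN : l ≤ N)
    (h1m : Monotone lam1) (h2m : Monotone lam2) (h3m : Monotone lam3)
    (h1l : ∀ a, lam1 a ≤ l) (h2N : ∀ a, N ≤ lam2 a)
    (h23 : ∀ a, lam2 a ≤ lam3 a) (h3 : ∀ a, lam3 a ≤ l + N)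
    (hD1 : ∀ p : ℕ × ℕ, p ∈ D1 ↔ p.1 < m ∧ p.2 < lam1 p.1)
    (hSkew : ∀ p : ℕ × ℕ, p ∈ Skew ↔ p.1 < m ∧ lam2 p.1 ≤ p.2 ∧ p.2 < lam3 p.1)
    (hf : Set.BijOn f ↑D1 ↑Skew) (hg : Set.InvOn g f ↑D1 ↑Skew)
    (hpic : ∀ A ∈ D1, ∀ B ∈ D1, A ≠ B → AboveRight A B → LexLt (f A) (f B))
    (hpic' : ∀ A ∈ Skew, ∀ B ∈ Skew, A ≠ B → AboveRight A B → LexLt (g A) (g B))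
    {e : ℕ} {Q U : Finset (ℕ × ℕ)} (hinv : Inv Skew D1 f g e Q U)
    (hempty : ∀ S ∈ Skew \ Q, (g S).1 ≠ S.1 + e)
    (hne : (Skew \ Q).Nonempty) :
    Relation.ReflTransGen (GameMove m (l + N) lam3) (conf e Q U) (conf (e + 1) Q U) ∧
      Inv Skew D1 f g (e + 1) Q U ∧ e + 2 ≤ m := by
  classical
  -- bound on the epoch
  have hem : e + 2 ≤ m := by
    obtain ⟨S, hS⟩ := hne
    rw [Finset.mem_sdiff] at hS
    have h1 : S.1 + e ≤ (g S).1 := by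
      by_contra hcon
      push_neg at hcon
      exact hS.2 (hinv.filled_lt S hS.1 hcon)
    have h2 : (g S).1 ≠ S.1 + e := hempty S (Finset.mem_sdiff.2 hS)
    have h3' : (g S).1 < m := ((hD1 _).1 (g_mem hf hg hS.1)).1
    omega
  -- no epoch-e tokens remain
  have hu1 : ∀ A ∈ U, (f A).1 + e + 1 ≤ A.1 := by
    intro A hA
    have h1 := hinv.u_ge A hA
    rcases lt_or_eq_of_le h1 with h | h
    · omega
    · exfalso
      set ρ : ℕ := (f A).1 with hρ
      have hA' : A ∈ U.filter (fun A => A.1 = ρ + e ∧ (f A).1 = ρ) := by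
        rw [Finset.mem_filter]; exact ⟨hA, by omega, rfl⟩
      have hcard : 0 < (U.filter (fun A => A.1 = ρ + e ∧ (f A).1 = ρ)).card :=
        Finset.card_pos.2 ⟨A, hA'⟩
      rw [hinv.count ρ, Finset.card_pos] at hcard
      obtain ⟨S, hS⟩ := hcard
      rw [Finset.mem_filter] at hS
      exact hempty S hS.1 (by omega)
  have hUcol : ∀ A ∈ U, A.2 < l := fun A hA =>
    lt_of_lt_of_le ((hD1 A).1 (hinv.hU hA)).2 (h1l _)
  have hQcol : ∀ S ∈ Q, l ≤ S.2 := fun S hS =>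
    le_trans (le_trans hN (h2N S.1)) ((hSkew S).1 (hinv.hQ hS)).2.1
  -- intermediate configurations of the cascade
  set C' : ℕ → Finset (ℕ × ℕ) := fun k =>
    Q ∪ (U.filter (fun A => A.1 ≤ e + k)).image (shiftPos (e + 1))
      ∪ (U.filter (fun A => e + k < A.1)).image (shiftPos e) with hC'
  have hC0 : C' 0 = conf e Q U := by
    have h1 : U.filter (fun A => A.1 ≤ e + 0) = ∅ := by
      rw [Finset.filter_eq_empty_iff]
      intro A hA
      have := hu1 A hA
      omega
    have h2 : U.filter (fun A => e + 0 < A.1) = U := by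
      rw [Finset.filter_true_of_mem]
      intro A hA
      have := hu1 A hA
      omega
    simp only [hC']
    rw [h1, h2]
    simp [conf]
  have hCend : C' (m - 1) = conf (e + 1) Q U := by
    have h1 : U.filter (fun A => A.1 ≤ e + (m - 1)) = U := by
      rw [Finset.filter_true_of_mem]
      intro A hA
      have := ((hD1 A).1 (hinv.hU hA)).1
      omega
    have h2 : U.filter (fun A => e + (m - 1) < A.1) = ∅ := by
      rw [Finset.filter_eq_empty_iff]
      intro A hA
      have := ((hD1 A).1 (hinv.hU hA)).1
      omega
    simp only [hC']
    rw [h1, h2]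
    simp [conf]
  -- single shift step
  have hstep : ∀ k, k + 1 < m → stepV lam3 k (k + 1) (C' k) = C' (k + 1) := by
    intro k hkm
    have hmemCk : ∀ (k' : ℕ) (p : ℕ × ℕ), p ∈ C' k' ↔
        p ∈ Q ∨ (∃ A ∈ U, A.1 ≤ e + k' ∧ shiftPos (e+1) A = p)
        ∨ (∃ A ∈ U, e + k' < A.1 ∧ shiftPos e A = p) := by
      intro k' p
      simp only [hC', Finset.mem_union, Finset.mem_image, Finset.mem_filter]
      constructor
      · rintro ((h | ⟨A, ⟨h1, h2⟩, h3⟩) | ⟨A, ⟨h1, h2⟩, h3⟩)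
        · exact Or.inl h
        · exact Or.inr (Or.inl ⟨A, h1, h2, h3⟩)
        · exact Or.inr (Or.inr ⟨A, h1, h2, h3⟩)
      · rintro (h | ⟨A, h1, h2, h3⟩ | ⟨A, h1, h2, h3⟩)
        · exact Or.inl (Or.inl h)
        · exact Or.inl (Or.inr ⟨A, ⟨h1, h2⟩, h3⟩)
        · exact Or.inr ⟨A, ⟨h1, h2⟩, h3⟩
    have hblocked : ∀ p ∈ Q, p.1 = k + 1 → p.2 < lam3 k → ((k : ℕ), p.2) ∈ Q := by
      intro p hpQ hp1 hp2
      have hpS := hinv.hQ hpQ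
      have hpS' := (hSkew p).1 hpS
      have hkS : ((k : ℕ), p.2) ∈ Skew := by
        rw [hSkew]
        refine ⟨by omega, ?_, hp2⟩
        have := h2m (show k ≤ k + 1 by omega)
        rw [hp1] at hpS'
        exact le_trans this hpS'.2.1
      have hpeq : p = ((k + 1 : ℕ), p.2) := by
        rw [Prod.ext_iff]; exact ⟨hp1, rfl⟩
      have hgE := gE1 hf hg hpic hpic' hkS (by rw [← hpeq]; exact hpS)
      have hle := hinv.q_le p hpQ
      rw [hpeq] at hle
      simp only at hle hgE
      have hle2 : (g ((k : ℕ), p.2)).1 ≤ k + e := by omega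
      rcases lt_or_eq_of_le hle2 with h | h
      · exact hinv.filled_lt _ hkS (by omega)
      · by_contra hcon
        exact hempty _ (Finset.mem_sdiff.2 ⟨hkS, hcon⟩) (by omega)
    have hF : (C' k).filter (fun p => p.1 = k + 1 ∧ p.2 < lam3 k ∧ ((k : ℕ), p.2) ∉ C' k)
        = (U.filter (fun A => A.1 = e + k + 1)).image (shiftPos e) := by
      ext p
      rw [Finset.mem_filter, hmemCk k p]
      simp only [Finset.mem_image, Finset.mem_filter]
      constructor
      · rintro ⟨hpC, hp1, hp2, hp3⟩
        rcases hpC with hQ | ⟨A, hAU, hAk, hAe⟩ | ⟨A, hAU, hAk, hAe⟩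
        · exact absurd ((hmemCk k _).2 (Or.inl (hblocked p hQ hp1 hp2))) hp3
        · exfalso
          have hrow : A.1 - (e + 1) = k + 1 := by rw [← hAe] at hp1; exact hp1
          have := hu1 A hAU
          omega
        · refine ⟨A, ⟨hAU, ?_⟩, hAe⟩
          have hrow : A.1 - e = k + 1 := by rw [← hAe] at hp1; exact hp1
          omega
      · rintro ⟨A, ⟨hAU, hA1⟩, hAe⟩
        have hcol : A.2 < l := hUcol A hAU
        have hrow : p.1 = k + 1 := by rw [← hAe]; simp only [shiftPos]; omega
        have hcol2 : p.2 = A.2 := by rw [← hAe]; rfl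
        refine ⟨Or.inr (Or.inr ⟨A, hAU, by omega, hAe⟩), hrow, ?_, ?_⟩
        · have := le_trans hN (le_trans (h2N k) (h23 k))
          omega
        · rw [hmemCk k]
          rintro (hmem | ⟨A', hA'U, hA'k, hA'e⟩ | ⟨A', hA'U, hA'k, hA'e⟩)
          · have := hQcol _ hmem
            simp only at this
            omega
          · have := hu1 A' hA'U
            have hr : A'.1 - (e + 1) = k := by
              have := congrArg Prod.fst hA'e
              simpa [shiftPos] using this
            omega
          · have hr : A'.1 - e = k := by
              have := congrArg Prod.fst hA'e
              simpa [shiftPos] using this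
            omega
    have hinj1 : ∀ A ∈ U, ∀ B ∈ U, shiftPos e A = shiftPos e B → A = B := by
      intro A hA B hB hEq
      have h1 := hu1 A hA
      have h2 := hu1 B hB
      rw [shiftPos, shiftPos, Prod.ext_iff] at hEq
      simp only at hEq
      rw [Prod.ext_iff]
      exact ⟨by omega, hEq.2⟩
    rw [stepV, hF]
    ext p
    simp only [Finset.mem_union, Finset.mem_sdiff, Finset.mem_image, Finset.mem_filter]
    rw [hmemCk k p, hmemCk (k + 1) p]
    constructor
    · rintro (⟨hq | ⟨A, hAU, hAk, hAe⟩ | ⟨A, hAU, hAk, hAe⟩, hnot⟩ |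
        ⟨q, ⟨A, ⟨hAU, hA1⟩, hAq⟩, hqp⟩)
      · exact Or.inl hq
      · exact Or.inr (Or.inl ⟨A, hAU, by omega, hAe⟩)
      · rcases eq_or_lt_of_le (show e + k + 1 ≤ A.1 by omega) with h | h
        · exact absurd ⟨A, ⟨hAU, h.symm⟩, hAe⟩ hnot
        · exact Or.inr (Or.inr ⟨A, hAU, by omega, hAe⟩)
      · refine Or.inr (Or.inl ⟨A, hAU, by omega, ?_⟩)
        rw [← hqp, ← hAq]
        rw [shiftPos, shiftPos, Prod.ext_iff]
        simp only
        exact ⟨by omega, by trivial⟩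
    · rintro (hq | ⟨A, hAU, hAk, hAe⟩ | ⟨A, hAU, hAk, hAe⟩)
      · refine Or.inl ⟨Or.inl hq, ?_⟩
        rintro ⟨B, ⟨hBU, hB1⟩, hBe⟩
        have h1 := hUcol B hBU
        have h2 := hQcol p hq
        have : B.2 = p.2 := by rw [← hBe]; rfl
        omega
      · rcases eq_or_lt_of_le hAk with h | h
        · -- A.1 = e + k + 1 : this is a freshly moved token
          refine Or.inr ⟨shiftPos e A, ⟨A, ⟨hAU, by omega⟩, rfl⟩, ?_⟩
          rw [← hAe]
          rw [shiftPos, shiftPos, Prod.ext_iff]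
          simp only
          exact ⟨by omega, by trivial⟩
        · refine Or.inl ⟨Or.inr (Or.inl ⟨A, hAU, by omega, hAe⟩), ?_⟩
          rintro ⟨B, ⟨hBU, hB1⟩, hBe⟩
          have h1 := hu1 A hAU
          have h2 := hu1 B hBU
          rw [← hAe] at hBe
          rw [shiftPos, shiftPos, Prod.ext_iff] at hBe
          simp only at hBe
          omega
      · refine Or.inl ⟨Or.inr (Or.inr ⟨A, hAU, by omega, hAe⟩), ?_⟩
        rintro ⟨B, ⟨hBU, hB1⟩, hBe⟩
        have hBA : B = A := hinj1 B hBU A hAU (by rw [hBe, hAe])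
        rw [hBA] at hB1
        omega
  -- assemble
  refine ⟨?_, ?_, hem⟩
  · have hchain : ∀ k, k ≤ m - 1 →
        Relation.ReflTransGen (GameMove m (l + N) lam3) (C' 0) (C' k) := by
      intro k
      induction k with
      | zero => intro _; exact Relation.ReflTransGen.refl
      | succ n ih =>
        intro hk
        have h1 : n + 1 < m := by omega
        exact Relation.ReflTransGen.tail (ih (by omega))
          ⟨n, n + 1, by omega, Or.inl ⟨h1, (hstep n h1).symm⟩⟩
    rw [← hC0, ← hCend]
    exact hchain (m - 1) (le_refl _)
  · refine ⟨hinv.hQ, hinv.hU, ?_, ?_, ?_, ?_, ?_, hinv.tot⟩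
    · intro S hS h
      rcases lt_or_eq_of_le (show (g S).1 ≤ S.1 + e by omega) with h' | h'
      · exact hinv.filled_lt S hS h'
      · by_contra hcon
        exact hempty S (Finset.mem_sdiff.2 ⟨hS, hcon⟩) h'
    · intro S hS
      have := hinv.q_le S hS
      omega
    · intro A hA
      have := hu1 A hA
      omega
    · intro ρ
      have hL : U.filter (fun A => A.1 = ρ + (e + 1) ∧ (f A).1 = ρ)
          = D1.filter (fun A => A.1 = ρ + (e + 1) ∧ (f A).1 = ρ) := by
        apply Finset.Subset.antisymm
        · exact Finset.filter_subset_filter _ hinv.hU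
        · intro A hA
          rw [Finset.mem_filter] at hA ⊢
          exact ⟨hinv.unflown A hA.1 (by omega), hA.2⟩
      have hR : (Skew \ Q).filter (fun S => S.1 = ρ ∧ (g S).1 = ρ + (e + 1))
          = Skew.filter (fun S => S.1 = ρ ∧ (g S).1 = ρ + (e + 1)) := by
        apply Finset.Subset.antisymm
        · exact Finset.filter_subset_filter _ (Finset.sdiff_subset)
        · intro S hS
          rw [Finset.mem_filter] at hS ⊢
          refine ⟨Finset.mem_sdiff.2 ⟨hS.1, fun hQmem => ?_⟩, hS.2⟩
          have := hinv.q_le S hQmem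
          omega
      rw [hL, hR]
      exact class_card hf hg ρ (e + 1)
    · intro A hA h
      exact hinv.unflown A hA (by omega)

lemma conf_init : conf 0 ∅ D1 = D1 := by
  ext p
  simp [conf, shiftPos]

lemma done_case {e : ℕ} {Q U : Finset (ℕ × ℕ)} (hinv : Inv Skew D1 f g e Q U)
    (h : (Skew \ Q).card = 0) : conf e Q U = Skew := by
  have h1 : Skew \ Q = ∅ := Finset.card_eq_zero.1 h
  have h2 : Q = Skew :=
    Finset.Subset.antisymm hinv.hQ (Finset.sdiff_eq_empty_iff_subset.1 h1)
  have h3 : U = ∅ := by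
    have := hinv.tot
    rw [h] at this
    exact Finset.card_eq_zero.1 this.symm
  rw [conf, h2, h3]
  simp

lemma wins (hN : l ≤ N)
    (h1m : Monotone lam1) (h2m : Monotone lam2) (h3m : Monotone lam3)
    (h1l : ∀ a, lam1 a ≤ l) (h2N : ∀ a, N ≤ lam2 a)
    (h23 : ∀ a, lam2 a ≤ lam3 a) (h3 : ∀ a, lam3 a ≤ l + N)
    (hD1 : ∀ p : ℕ × ℕ, p ∈ D1 ↔ p.1 < m ∧ p.2 < lam1 p.1)
    (hSkew : ∀ p : ℕ × ℕ, p ∈ Skew ↔ p.1 < m ∧ lam2 p.1 ≤ p.2 ∧ p.2 < lam3 p.1)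
    (hf : Set.BijOn f ↑D1 ↑Skew) (hg : Set.InvOn g f ↑D1 ↑Skew)
    (hpic : ∀ A ∈ D1, ∀ B ∈ D1, A ≠ B → AboveRight A B → LexLt (f A) (f B))
    (hpic' : ∀ A ∈ Skew, ∀ B ∈ Skew, A ≠ B → AboveRight A B → LexLt (g A) (g B)) :
    ∀ K d e Q U, Inv Skew D1 f g e Q U → (Skew \ Q).card ≤ K → m - e ≤ d →
      Relation.ReflTransGen (GameMove m (l + N) lam3) (conf e Q U) Skew := by
  intro K
  induction K with
  | zero =>
    intro d e Q U hinv hcard _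
    rw [done_case hinv (by omega)]
  | succ K ihK =>
    intro d
    induction d with
    | zero =>
      intro e Q U hinv hcard hd
      rcases Nat.eq_zero_or_pos (Skew \ Q).card with h0 | h0
      · rw [done_case hinv h0]
      · exfalso
        obtain ⟨S, hS⟩ := Finset.card_pos.1 h0
        rw [Finset.mem_sdiff] at hS
        have h1 : S.1 + e ≤ (g S).1 := by
          by_contra hcon
          push_neg at hcon
          exact hS.2 (hinv.filled_lt S hS.1 hcon)
        have h2 : (g S).1 < m := ((hD1 _).1 (g_mem hf hg hS.1)).1
        omega
    | succ dd ihd =>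
      intro e Q U hinv hcard hd
      rcases Nat.eq_zero_or_pos (Skew \ Q).card with h0 | h0
      · rw [done_case hinv h0]
      · by_cases hfl : ((Skew \ Q).filter (fun S => (g S).1 = S.1 + e)).Nonempty
        · obtain ⟨Q', U', hmove, hinv', hlt⟩ :=
            flight hN h1m h2m h3m h1l h2N h23 h3 hD1 hSkew hf hg hpic hpic' hinv hfl
          exact Relation.ReflTransGen.head hmove
            (ihK m e Q' U' hinv' (by omega) (by omega))
        · have hempty : ∀ S ∈ Skew \ Q, (g S).1 ≠ S.1 + e := by
            intro S hS hcon
            exact hfl ⟨S, Finset.mem_filter.2 ⟨hS, hcon⟩⟩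
          obtain ⟨hrtg, hinv', hem⟩ :=
            cascade hN h1m h2m h3m h1l h2N h23 h3 hD1 hSkew hf hg hpic hpic' hinv
              hempty (Finset.card_pos.1 h0)
          exact Relation.ReflTransGen.trans hrtg
            (ihd (e + 1) Q U hinv' hcard (by omega))

end
end Stmt19

/-- In the Grassmannian root game with big region given by the
Young diagram `λ_{3̄}` (row lengths `lam3`), `1`-tokens initially forming
`λ₁ = λ(σ)` (row lengths `lam1 ≤ l`), `2`-tokens forming `λ₂ = N + λ(μ)`
(row lengths `lam2`, with `N ≤ lam2 ≤ lam3`), `N ≥ l`, and a picture `f` from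
`λ₁` to the skew shape `λ_{3̄}/λ₂`: the Grassmannian root game algorithm wins,
i.e. there is a sequence of moves of the `1`-tokens taking the initial
configuration `D1 = λ₁` to the configuration `Skew = λ_{3̄}/λ₂`, so that at
the end every square of `λ_{3̄}/λ₂` contains exactly one `1`-token. -/
theorem stmt19 (m l N : ℕ) (hN : l ≤ N)
    (lam1 lam2 lam3 : ℕ → ℕ)
    (h1m : Monotone lam1) (h2m : Monotone lam2) (h3m : Monotone lam3)
    (h1l : ∀ a, lam1 a ≤ l) (h2N : ∀ a, N ≤ lam2 a)
    (h23 : ∀ a, lam2 a ≤ lam3 a) (h3 : ∀ a, lam3 a ≤ l + N)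
    (D1 Skew : Finset (ℕ × ℕ))
    (hD1 : ∀ p : ℕ × ℕ, p ∈ D1 ↔ p.1 < m ∧ p.2 < lam1 p.1)
    (hSkew : ∀ p : ℕ × ℕ, p ∈ Skew ↔ p.1 < m ∧ lam2 p.1 ≤ p.2 ∧ p.2 < lam3 p.1)
    (f g : ℕ × ℕ → ℕ × ℕ)
    (hf : Set.BijOn f ↑D1 ↑Skew) (hg : Set.InvOn g f ↑D1 ↑Skew)
    (hpic : ∀ A ∈ D1, ∀ B ∈ D1, A ≠ B → AboveRight A B → LexLt (f A) (f B))
    (hpic' : ∀ A ∈ Skew, ∀ B ∈ Skew, A ≠ B → AboveRight A B → LexLt (g A) (g B)) :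
    Relation.ReflTransGen (GameMove m (l + N) lam3) D1 Skew := by
  have hinv0 := Stmt19.inv_init h1m hD1 hSkew hf hg hpic hpic'
  have h := Stmt19.wins hN h1m h2m h3m h1l h2N h23 h3 hD1 hSkew hf hg hpic hpic'
    Skew.card m 0 ∅ D1 hinv0 (by simp) (by omega)
  rwa [Stmt19.conf_init] at h
end
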